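/- arXiv:2004.03954 — 3 statements merged into one kernel-verified Lean document; each statement's English description precedes it below -/
import Mathlib

section
/- Suppose the DM-TWC satisfies condition (b1). Then there exists a distribution P*_{X₂} on 𝒳₂ such that for every x₁ ∈ 𝒳₁, P*_{X₂} maximizes P ↦ 𝓘(P, P_{Y₁|X₁=x₁,X₂}) over all distributions P on 𝒳₂ (i.e., the one-way channels P_{Y₁|X₁=x₁,X₂}, x₁ ∈ 𝒳₁, admit a common optimal input distribution). -/
open scoped BigOperators

/-- `P` is a probability distribution on the finite alphabet `A`. -/
def IsDist {A : Type*} [Fintype A] (P : A → ℝ) : Prop :=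
  (∀ a, 0 ≤ P a) ∧ ∑ a, P a = 1

/-- Input–output mutual information 𝓘(P, W) (in bits) of a channel `W`
from the finite alphabet `A` to the finite alphabet `B` under input distribution `P`. -/
noncomputable def mutInfo {A B : Type*} [Fintype A] [Fintype B]
    (P : A → ℝ) (W : A → B → ℝ) : ℝ :=
  ∑ a, ∑ b, P a * W a b * Real.logb 2 (W a b / ∑ a', P a' * W a' b)

/-- Shannon entropy (base 2) of a distribution on a finite alphabet. -/
noncomputable def ent {B : Type*} [Fintype B] (Q : B → ℝ) : ℝ :=
  -∑ b, Q b * Real.logb 2 (Q b)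

section TWC

variable {X1 X2 Y1 Y2 : Type*} [Fintype X1] [Fintype X2] [Fintype Y1] [Fintype Y2]

/-- A joint input distribution on `X1 × X2`. -/
def IsJointDist (P : X1 → X2 → ℝ) : Prop :=
  (∀ x1 x2, 0 ≤ P x1 x2) ∧ ∑ x1, ∑ x2, P x1 x2 = 1

/-- Marginal of a joint input distribution on `X1`. -/
noncomputable def margin1 (P : X1 → X2 → ℝ) (x1 : X1) : ℝ := ∑ x2, P x1 x2

/-- Marginal of a joint input distribution on `X2`. -/
noncomputable def margin2 (P : X1 → X2 → ℝ) (x2 : X2) : ℝ := ∑ x1, P x1 x2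

/-- Conditional distribution P_{X₁|X₂=x₂}. -/
noncomputable def cond1given2 (P : X1 → X2 → ℝ) (x2 : X2) (x1 : X1) : ℝ :=
  P x1 x2 / margin2 P x2

/-- Conditional distribution P_{X₂|X₁=x₁}. -/
noncomputable def cond2given1 (P : X1 → X2 → ℝ) (x1 : X1) (x2 : X2) : ℝ :=
  P x1 x2 / margin1 P x1

/-- The conditional mutual information I(X₁;Y₂|X₂) under the joint input distribution `P`,
where `W2` is the marginal channel P_{Y₂|X₁,X₂}. -/
noncomputable def condMI12 (P : X1 → X2 → ℝ) (W2 : X1 → X2 → Y2 → ℝ) : ℝ :=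
  ∑ x2, margin2 P x2 * mutInfo (cond1given2 P x2) (fun x1 => W2 x1 x2)

/-- The conditional mutual information I(X₂;Y₁|X₁) under the joint input distribution `P`,
where `W1` is the marginal channel P_{Y₁|X₁,X₂}. -/
noncomputable def condMI21 (P : X1 → X2 → ℝ) (W1 : X1 → X2 → Y1 → ℝ) : ℝ :=
  ∑ x1, margin1 P x1 * mutInfo (cond2given1 P x1) (fun x2 => W1 x1 x2)

/-- The rate region 𝓡(P_{X₁,X₂}). -/
noncomputable def rateRegion (W1 : X1 → X2 → Y1 → ℝ) (W2 : X1 → X2 → Y2 → ℝ)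
    (P : X1 → X2 → ℝ) : Set (ℝ × ℝ) :=
  {r | 0 ≤ r.1 ∧ r.1 ≤ condMI12 P W2 ∧ 0 ≤ r.2 ∧ r.2 ≤ condMI21 P W1}

/-- Shannon's inner bound C_I: the closure of the convex hull of the union of the
rate regions of all product input distributions. -/
noncomputable def innerBound (W1 : X1 → X2 → Y1 → ℝ) (W2 : X1 → X2 → Y2 → ℝ) :
    Set (ℝ × ℝ) :=
  closure (convexHull ℝ
    (⋃ P ∈ {P : X1 → X2 → ℝ |
        ∃ P1 P2, IsDist P1 ∧ IsDist P2 ∧ P = fun x1 x2 => P1 x1 * P2 x2},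
      rateRegion W1 W2 P))

/-- Shannon's outer bound C_O: the union of the rate regions of all joint input
distributions. -/
noncomputable def outerBound (W1 : X1 → X2 → Y1 → ℝ) (W2 : X1 → X2 → Y2 → ℝ) :
    Set (ℝ × ℝ) :=
  ⋃ P ∈ {P : X1 → X2 → ℝ | IsJointDist P}, rateRegion W1 W2 P

/-- The largest input–output mutual information of the one-way channel
P_{Y₂|X₁,X₂=x₂}. -/
noncomputable def capAt (W2 : X1 → X2 → Y2 → ℝ) (x2 : X2) : ℝ :=
  sSup {I | ∃ P : X1 → ℝ, IsDist P ∧ I = mutInfo P (fun x1 => W2 x1 x2)}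

/-- α*: how close the channels {P_{Y₂|X₁,X₂=x₂}} are to having a common optimal
input distribution. -/
noncomputable def alphaStar (W2 : X1 → X2 → Y2 → ℝ) : ℝ :=
  sInf {a | ∃ Pt : X1 → ℝ, IsDist Pt ∧
    a = ⨆ x2, |mutInfo Pt (fun x1 => W2 x1 x2) - capAt W2 x2|}

/-- β*: the degree of invariance in the input–output mutual information of the
channels {P_{Y₁|X₁=x₁,X₂}}. -/
noncomputable def betaStar (W1 : X1 → X2 → Y1 → ℝ) : ℝ :=
  sSup {b | ∃ (P : X2 → ℝ) (x1 x1' : X1), IsDist P ∧ x1 ≠ x1' ∧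
    b = |mutInfo P (fun x2 => W1 x1 x2) - mutInfo P (fun x2 => W1 x1' x2)|}

/-- I*₁ = max_{x₂} max_{P} 𝓘(P, P_{Y₂|X₁,X₂=x₂}). -/
noncomputable def IStar1 (W2 : X1 → X2 → Y2 → ℝ) : ℝ :=
  sSup {I | ∃ (x2 : X2) (P : X1 → ℝ), IsDist P ∧ I = mutInfo P (fun x1 => W2 x1 x2)}

/-- I*₂ = max_{x₁} max_{P} 𝓘(P, P_{Y₁|X₁=x₁,X₂}). -/
noncomputable def IStar2 (W1 : X1 → X2 → Y1 → ℝ) : ℝ :=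
  sSup {I | ∃ (x1 : X1) (P : X2 → ℝ), IsDist P ∧ I = mutInfo P (fun x2 => W1 x1 x2)}

/-- Condition (a): `Pstar` is a common optimal input distribution for the channels
{P_{Y₂|X₁,X₂=x₂} : x₂ ∈ 𝒳₂}. -/
def CondA (W2 : X1 → X2 → Y2 → ℝ) (Pstar : X1 → ℝ) : Prop :=
  IsDist Pstar ∧ ∀ x2 : X2, ∀ P : X1 → ℝ, IsDist P →
    mutInfo P (fun x1 => W2 x1 x2) ≤ mutInfo Pstar (fun x1 => W2 x1 x2)

/-- Condition (b1): for every input distribution on 𝒳₂, the input–output mutual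
information of P_{Y₁|X₁=x₁,X₂} does not depend on x₁. -/
def CondB1 (W1 : X1 → X2 → Y1 → ℝ) : Prop :=
  ∀ P : X2 → ℝ, IsDist P → ∀ x1 x1' : X1,
    mutInfo P (fun x2 => W1 x1 x2) = mutInfo P (fun x2 => W1 x1' x2)

/-- H(Y₁|X₁,X₂) under the joint input distribution `P`. -/
noncomputable def condEntFull (P : X1 → X2 → ℝ) (W1 : X1 → X2 → Y1 → ℝ) : ℝ :=
  ∑ x1, ∑ x2, P x1 x2 * ent (W1 x1 x2)

/-- H(Y₁|X₁) under the joint input distribution `P`. -/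
noncomputable def condEntY1X1 (P : X1 → X2 → ℝ) (W1 : X1 → X2 → Y1 → ℝ) : ℝ :=
  ∑ x1, margin1 P x1 * ent (fun y1 => ∑ x2, cond2given1 P x1 x2 * W1 x1 x2 y1)

/-- Condition (b2), part (i): H(Y₁|X₁,X₂) depends on the joint input distribution
only through its marginal on 𝒳₂. -/
def CondB2i (W1 : X1 → X2 → Y1 → ℝ) : Prop :=
  ∀ P Q : X1 → X2 → ℝ, IsJointDist P → IsJointDist Q →
    margin2 P = margin2 Q → condEntFull P W1 = condEntFull Q W1

/-- Condition (b2), part (ii), relative to the common optimal input `Pstar`: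
H⁽¹⁾(Y₁|X₁) ≤ H⁽²⁾(Y₁|X₁) where P⁽²⁾ = P*_{X₁}·P⁽¹⁾_{X₂}. -/
def CondB2ii (W1 : X1 → X2 → Y1 → ℝ) (Pstar : X1 → ℝ) : Prop :=
  ∀ P : X1 → X2 → ℝ, IsJointDist P →
    condEntY1X1 P W1 ≤ condEntY1X1 (fun x1 x2 => Pstar x1 * margin2 P x2) W1



/-! Written as `H(Y) - H(Y|X)`, mutual information is a continuous function of the input
on the compact probability simplex, so each channel `x₂ ↦ P_{Y₁|X₁=x₁,X₂=x₂}` has an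
optimal input distribution. By (b1) all these channels have the same mutual-information
function, hence the optimal input for one value of `x₁` is optimal for every `x₁`. -/

open Finset Real

section InformationTheory

variable {A B : Type*} [Fintype A] [Fintype B]

theorem continuous_ent : Continuous (ent : (B → ℝ) → ℝ) := by
  have hmul : Continuous fun x : ℝ => x * logb 2 x := by
    simpa only [logb, mul_div_assoc] using continuous_mul_log.div_const (log 2)
  exact (continuous_finsetSum _ fun b _ => hmul.comp (continuous_apply b)).neg

theorem mutInfo_eq_ent_sub {P : A → ℝ} (hP : ∀ a, 0 ≤ P a) {W : A → B → ℝ}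
    (hW : ∀ a b, 0 ≤ W a b) :
    mutInfo P W = ent (fun b => ∑ a, P a * W a b) - ∑ a, P a * ent (W a) := by
  set S : B → ℝ := fun b => ∑ a, P a * W a b
  have hterm : ∀ a b, P a * W a b * logb 2 (W a b / S b)
      = P a * (W a b * logb 2 (W a b)) - P a * W a b * logb 2 (S b) := by
    intro a b
    by_cases h : P a * W a b = 0
    · simp [h, ← mul_assoc]
    have hPW : 0 < P a * W a b := lt_of_le_of_ne (mul_nonneg (hP a) (hW a b)) (Ne.symm h)
    have hS : 0 < S b := hPW.trans_le <|
      single_le_sum (f := fun a => P a * W a b) (fun a _ => mul_nonneg (hP a) (hW a b))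
        (mem_univ a)
    rw [logb_div (right_ne_zero_of_mul h) hS.ne']
    ring
  have hout : ∑ a, ∑ b, P a * W a b * logb 2 (S b) = ∑ b, S b * logb 2 (S b) := by
    rw [sum_comm]
    simp only [S, sum_mul]
  calc mutInfo P W
      = ∑ a, ∑ b, (P a * (W a b * logb 2 (W a b)) - P a * W a b * logb 2 (S b)) := by
        simp only [mutInfo, S, hterm]
    _ = -∑ b, S b * logb 2 (S b) + ∑ a, P a * ∑ b, W a b * logb 2 (W a b) := by
        simp only [sum_sub_distrib, hout, mul_sum]
        ring
    _ = ent S - ∑ a, P a * ent (W a) := by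
        simp only [ent, mul_neg, sum_neg_distrib]
        ring

theorem exists_isDist_forall_mutInfo_le [Nonempty A] {W : A → B → ℝ}
    (hW : ∀ a b, 0 ≤ W a b) :
    ∃ Pstar : A → ℝ, IsDist Pstar ∧ ∀ P : A → ℝ, IsDist P → mutInfo P W ≤ mutInfo Pstar W := by
  have hcont : Continuous fun P : A → ℝ =>
      ent (fun b => ∑ a, P a * W a b) - ∑ a, P a * ent (W a) :=
    (continuous_ent.comp (by fun_prop)).sub (by fun_prop)
  classical
  obtain ⟨Pstar, hPstar, hmax⟩ := (isCompact_stdSimplex ℝ A).exists_isMaxOn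
    ⟨_, single_mem_stdSimplex ℝ (Classical.arbitrary A)⟩ hcont.continuousOn
  refine ⟨Pstar, hPstar, fun P hP => ?_⟩
  rw [mutInfo_eq_ent_sub hP.1 hW, mutInfo_eq_ent_sub hPstar.1 hW]
  exact hmax hP

end InformationTheory

/-- if the DM-TWC satisfies condition (b1), then the one-way channels
P_{Y₁|X₁=x₁,X₂}, x₁ ∈ 𝒳₁, admit a common optimal input distribution. -/
theorem stmt0 [Nonempty X1] [Nonempty X2]
    (W1 : X1 → X2 → Y1 → ℝ) (hW1 : ∀ x1 x2, IsDist (W1 x1 x2))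
    (hb1 : CondB1 W1) :
    ∃ Pstar2 : X2 → ℝ, IsDist Pstar2 ∧
      ∀ x1 : X1, ∀ P : X2 → ℝ, IsDist P →
        mutInfo P (fun x2 => W1 x1 x2) ≤ mutInfo Pstar2 (fun x2 => W1 x1 x2) := by
  obtain ⟨x₀⟩ := ‹Nonempty X1›
  obtain ⟨Pstar, hPstar, hmax⟩ :=
    exists_isDist_forall_mutInfo_le (W := fun x2 => W1 x₀ x2) fun x2 => (hW1 x₀ x2).1
  refine ⟨Pstar, hPstar, fun x1 P hP => ?_⟩
  calc mutInfo P (fun x2 => W1 x1 x2)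
      = mutInfo P (fun x2 => W1 x₀ x2) := hb1 P hP x1 x₀
    _ ≤ mutInfo Pstar (fun x2 => W1 x₀ x2) := hmax P hP
    _ = mutInfo Pstar (fun x2 => W1 x1 x2) := hb1 Pstar hPstar x₀ x1

end TWC
end

section
/- Let β ≥ 0 be such that for every distribution P on 𝒳₂ and all x₁, x₁' ∈ 𝒳₁, |𝓘(P, P_{Y₁|X₁=x₁,X₂}) − 𝓘(P, P_{Y₁|X₁=x₁',X₂})| ≤ β (the channels {P_{Y₁|X₁=x₁,X₂} : x₁ ∈ 𝒳₁} are β-invariant in input–output mutual information). Then for every joint input distribution P⁽¹⁾_{X₁,X₂} with marginal P⁽¹⁾_{X₂} and every distribution Q on 𝒳₁, setting P⁽²⁾_{X₁,X₂} = Q·P⁽¹⁾_{X₂}, one has I⁽¹⁾(X₂;Y₁|X₁) ≤ I⁽²⁾(X₂;Y₁|X₁) + 2β. -/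
open scoped BigOperators

section TWC

variable {X1 X2 Y1 Y2 : Type*} [Fintype X1] [Fintype X2] [Fintype Y1] [Fintype Y2]

lemma gibbs {B : Type*} [Fintype B] (q r : B → ℝ)
    (hq : ∀ b, 0 ≤ q b) (hr : ∀ b, 0 ≤ r b) (hqs : ∑ b, q b = 1) (hrs : ∑ b, r b ≤ 1)
    (hsupp : ∀ b, 0 < q b → 0 < r b) :
    0 ≤ ∑ b, q b * Real.logb 2 (q b / r b) := by
  have key : ∑ b, q b * Real.log (r b / q b) ≤ 0 := by
    have h1 : ∑ b, q b * Real.log (r b / q b) ≤ ∑ b, (r b - q b) := by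
      apply Finset.sum_le_sum
      intro b _
      rcases eq_or_lt_of_le (hq b) with h | h
      · simp only [← h, zero_mul, sub_zero]
        exact hr b
      · have hrb := hsupp b h
        have hlog : Real.log (r b / q b) ≤ r b / q b - 1 :=
          Real.log_le_sub_one_of_pos (by positivity)
        have := mul_le_mul_of_nonneg_left hlog (hq b)
        calc q b * Real.log (r b / q b) ≤ q b * (r b / q b - 1) := this
          _ = r b - q b := by field_simp
    have : ∑ b, (r b - q b) ≤ 0 := by
      rw [Finset.sum_sub_distrib, hqs]; linarith
    linarith
  have hterm : ∀ b, q b * Real.logb 2 (q b / r b)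
      = (Real.log 2)⁻¹ * -(q b * Real.log (r b / q b)) := by
    intro b
    rcases eq_or_lt_of_le (hq b) with h | h
    · simp [← h]
    · have hrb := hsupp b h
      rw [Real.logb, Real.log_div (ne_of_gt h) (ne_of_gt hrb),
          Real.log_div (ne_of_gt hrb) (ne_of_gt h)]
      field_simp
      ring
  rw [Finset.sum_congr rfl (fun b _ => hterm b), ← Finset.mul_sum]
  have h2 : (0:ℝ) < Real.log 2 := Real.log_pos (by norm_num)
  have : 0 ≤ ∑ b, -(q b * Real.log (r b / q b)) := by
    rw [Finset.sum_neg_distrib]; linarith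
  positivity

lemma concave_mutInfo {K A B : Type*} [Fintype K] [Fintype A] [Fintype B]
    (lam : K → ℝ) (hl0 : ∀ k, 0 ≤ lam k) (hl1 : ∑ k, lam k = 1)
    (Pk : K → A → ℝ) (hPk0 : ∀ k a, 0 ≤ Pk k a)
    (hPk : ∀ k, 0 < lam k → ∑ a, Pk k a = 1)
    (W : A → B → ℝ) (hW : ∀ a, IsDist (W a)) :
    ∑ k, lam k * mutInfo (Pk k) W ≤ mutInfo (fun a => ∑ k, lam k * Pk k a) W := by
  set qbar : B → ℝ := fun b => ∑ a', (∑ k, lam k * Pk k a') * W a' b with hqbar_def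
  set qk : K → B → ℝ := fun k b => ∑ a', Pk k a' * W a' b with hqk_def
  have hqk0 : ∀ k b, 0 ≤ qk k b := fun k b =>
    Finset.sum_nonneg fun a _ => mul_nonneg (hPk0 k a) ((hW a).1 b)
  have hqbar_eq : ∀ b, qbar b = ∑ k, lam k * qk k b := by
    intro b
    simp only [hqbar_def, hqk_def, Finset.sum_mul, Finset.mul_sum]
    rw [Finset.sum_comm]
    congr 1; ext a; congr 1; ext k; ring
  have hqbar_ge : ∀ k b, lam k * qk k b ≤ qbar b := by
    intro k b
    rw [hqbar_eq]
    exact Finset.single_le_sum (fun k' _ => mul_nonneg (hl0 k') (hqk0 k' b))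
      (Finset.mem_univ k)
  have hqbar0 : ∀ b, 0 ≤ qbar b := by
    intro b
    rw [hqbar_eq]
    exact Finset.sum_nonneg fun k _ => mul_nonneg (hl0 k) (hqk0 k b)
  have hqks : ∀ k, 0 < lam k → ∑ b, qk k b = 1 := by
    intro k hk
    simp only [hqk_def]
    rw [Finset.sum_comm]
    have h : ∀ a, ∑ b, Pk k a * W a b = Pk k a := by
      intro a; rw [← Finset.mul_sum, (hW a).2, mul_one]
    rw [Finset.sum_congr rfl fun a _ => h a, hPk k hk]
  have hqbars : ∑ b, qbar b = 1 := by
    rw [Finset.sum_congr rfl fun b _ => hqbar_eq b, Finset.sum_comm]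
    have h : ∀ k, ∑ b, lam k * qk k b = lam k := by
      intro k
      rw [← Finset.mul_sum]
      rcases eq_or_lt_of_le (hl0 k) with h | h
      · rw [← h, zero_mul]
      · rw [hqks k h, mul_one]
    rw [Finset.sum_congr rfl fun k _ => h k, hl1]
  have hmix : mutInfo (fun a => ∑ k, lam k * Pk k a) W
      = ∑ k, lam k * ∑ a, ∑ b, Pk k a * W a b * Real.logb 2 (W a b / qbar b) := by
    have e1 : mutInfo (fun a => ∑ k, lam k * Pk k a) W
        = ∑ a, ∑ b, (∑ k, lam k * Pk k a) * W a b
            * Real.logb 2 (W a b / qbar b) := rfl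
    rw [e1]
    have h1 : ∀ a : A, ∑ b, (∑ k, lam k * Pk k a) * W a b
          * Real.logb 2 (W a b / qbar b)
        = ∑ k, ∑ b, lam k * (Pk k a * W a b * Real.logb 2 (W a b / qbar b)) := by
      intro a
      rw [Finset.sum_comm]
      apply Finset.sum_congr rfl
      intro b _
      rw [Finset.sum_mul, Finset.sum_mul]
      exact Finset.sum_congr rfl fun k _ => by ring
    rw [Finset.sum_congr rfl fun a _ => h1 a, Finset.sum_comm]
    apply Finset.sum_congr rfl
    intro k _
    rw [Finset.mul_sum]
    exact Finset.sum_congr rfl fun a _ => by rw [Finset.mul_sum]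
  rw [hmix]
  apply Finset.sum_le_sum
  intro k _
  rcases eq_or_lt_of_le (hl0 k) with hk | hk
  · rw [← hk, zero_mul, zero_mul]
  apply mul_le_mul_of_nonneg_left ?_ (hl0 k)
  rw [← sub_nonneg]
  have e2 : mutInfo (Pk k) W
      = ∑ a, ∑ b, Pk k a * W a b * Real.logb 2 (W a b / qk k b) := rfl
  have hdiff : (∑ a, ∑ b, Pk k a * W a b * Real.logb 2 (W a b / qbar b))
      - mutInfo (Pk k) W
      = ∑ b, qk k b * Real.logb 2 (qk k b / qbar b) := by
    rw [e2, ← Finset.sum_sub_distrib]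
    simp only [← Finset.sum_sub_distrib]
    rw [Finset.sum_comm]
    apply Finset.sum_congr rfl
    intro b _
    rcases eq_or_lt_of_le (hqk0 k b) with hqkb | hqkb
    · have hz : ∀ a ∈ Finset.univ, Pk k a * W a b = 0 := by
        rw [← Finset.sum_eq_zero_iff_of_nonneg
          (fun a _ => mul_nonneg (hPk0 k a) ((hW a).1 b))]
        exact hqkb.symm
      rw [← hqkb, zero_mul]
      apply Finset.sum_eq_zero
      intro a ha
      rw [hz a ha, zero_mul, zero_mul, sub_zero]
    · have hqbarb : 0 < qbar b := lt_of_lt_of_le (by positivity) (hqbar_ge k b)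
      have h : ∀ a, Pk k a * W a b * Real.logb 2 (W a b / qbar b)
          - Pk k a * W a b * Real.logb 2 (W a b / qk k b)
          = Pk k a * W a b * Real.logb 2 (qk k b / qbar b) := by
        intro a
        rcases eq_or_lt_of_le (mul_nonneg (hPk0 k a) ((hW a).1 b)) with hpw | hpw
        · rw [← hpw]; ring
        · have hwab : W a b ≠ 0 := by
            intro h0; rw [h0, mul_zero] at hpw; exact lt_irrefl _ hpw
          rw [Real.logb_div hwab (ne_of_gt hqbarb),
              Real.logb_div hwab (ne_of_gt hqkb),
              Real.logb_div (ne_of_gt hqkb) (ne_of_gt hqbarb)]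
          ring
      rw [Finset.sum_congr rfl fun a _ => h a, ← Finset.sum_mul]
  rw [hdiff]
  exact gibbs (qk k) qbar (hqk0 k) hqbar0 (hqks k hk) (le_of_eq hqbars)
    (fun b hb => lt_of_lt_of_le (by positivity) (hqbar_ge k b))

/-- if the channels {P_{Y₁|X₁=x₁,X₂} : x₁ ∈ 𝒳₁} are β-invariant in
input–output mutual information, then I⁽¹⁾(X₂;Y₁|X₁) ≤ I⁽²⁾(X₂;Y₁|X₁) + 2β, where
P⁽²⁾ = Q·P⁽¹⁾_{X₂} for any input distribution Q on 𝒳₁. -/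
theorem stmt5 [Nonempty X1] [Nonempty X2]
    (W1 : X1 → X2 → Y1 → ℝ) (W2 : X1 → X2 → Y2 → ℝ)
    (hW1 : ∀ x1 x2, IsDist (W1 x1 x2)) (hW2 : ∀ x1 x2, IsDist (W2 x1 x2))
    (β : ℝ) (hβ : 0 ≤ β)
    (hinv : ∀ P : X2 → ℝ, IsDist P → ∀ x1 x1' : X1,
      |mutInfo P (fun x2 => W1 x1 x2) - mutInfo P (fun x2 => W1 x1' x2)| ≤ β)
    (P : X1 → X2 → ℝ) (hP : IsJointDist P)
    (Q : X1 → ℝ) (hQ : IsDist Q) :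
    condMI21 P W1 ≤ condMI21 (fun x1 x2 => Q x1 * margin2 P x2) W1 + 2 * β := by
  obtain ⟨x0⟩ := (inferInstance : Nonempty X1)
  -- basic facts
  have hm1_0 : ∀ x1, 0 ≤ margin1 P x1 :=
    fun x1 => Finset.sum_nonneg fun x2 _ => hP.1 x1 x2
  have hm1s : ∑ x1, margin1 P x1 = 1 := hP.2
  have hm2_0 : ∀ x2, 0 ≤ margin2 P x2 :=
    fun x2 => Finset.sum_nonneg fun x1 _ => hP.1 x1 x2
  have hm2s : ∑ x2, margin2 P x2 = 1 := by
    rw [show (∑ x2, margin2 P x2) = ∑ x2, ∑ x1, P x1 x2 from rfl, Finset.sum_comm]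
    exact hP.2
  have hm2d : IsDist (margin2 P) := ⟨hm2_0, hm2s⟩
  have hc0 : ∀ x1 x2, 0 ≤ cond2given1 P x1 x2 :=
    fun x1 x2 => div_nonneg (hP.1 x1 x2) (hm1_0 x1)
  have hP0 : ∀ x1, margin1 P x1 = 0 → ∀ x2, P x1 x2 = 0 := by
    intro x1 h x2
    have := (Finset.sum_eq_zero_iff_of_nonneg (fun x2 _ => hP.1 x1 x2)).1 h
    exact this x2 (Finset.mem_univ x2)
  have hcs : ∀ x1, 0 < margin1 P x1 → ∑ x2, cond2given1 P x1 x2 = 1 := by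
    intro x1 h
    have e : ∑ x2, cond2given1 P x1 x2 = (∑ x2, P x1 x2) / margin1 P x1 := by
      rw [Finset.sum_div]
      rfl
    rw [e, div_eq_one_iff_eq (ne_of_gt h)]
    rfl
  -- Step 1: condMI21 P W1 ≤ ∑ x1, margin1 P x1 * mutInfo (cond x1) (W1 x0) + β
  have step1 : condMI21 P W1
      ≤ (∑ x1, margin1 P x1 * mutInfo (cond2given1 P x1) (fun x2 => W1 x0 x2)) + β := by
    have : condMI21 P W1 ≤ ∑ x1, (margin1 P x1 * mutInfo (cond2given1 P x1) (fun x2 => W1 x0 x2)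
        + margin1 P x1 * β) := by
      rw [condMI21]
      apply Finset.sum_le_sum
      intro x1 _
      rcases eq_or_lt_of_le (hm1_0 x1) with h | h
      · rw [← h]; simp
      · have hd : IsDist (cond2given1 P x1) := ⟨hc0 x1, hcs x1 h⟩
        have := (abs_le.1 (hinv (cond2given1 P x1) hd x1 x0)).2
        nlinarith
    calc condMI21 P W1 ≤ _ := this
      _ = _ := by
        rw [Finset.sum_add_distrib, ← Finset.sum_mul, hm1s, one_mul]
  -- Step 2: concavity
  have step2 : (∑ x1, margin1 P x1 * mutInfo (cond2given1 P x1) (fun x2 => W1 x0 x2))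
      ≤ mutInfo (margin2 P) (fun x2 => W1 x0 x2) := by
    have h := concave_mutInfo (margin1 P) hm1_0 hm1s (cond2given1 P)
      hc0 hcs (fun x2 => W1 x0 x2) (fun x2 => hW1 x0 x2)
    have hbar : (fun x2 => ∑ x1, margin1 P x1 * cond2given1 P x1 x2) = margin2 P := by
      funext x2
      rw [margin2]
      apply Finset.sum_congr rfl
      intro x1 _
      rcases eq_or_lt_of_le (hm1_0 x1) with hm | hm
      · rw [← hm, zero_mul, hP0 x1 hm.symm x2]
      · rw [cond2given1, mul_div_cancel₀ _ (ne_of_gt hm)]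
    rwa [hbar] at h
  -- Step 3
  have step3 : mutInfo (margin2 P) (fun x2 => W1 x0 x2)
      ≤ condMI21 (fun x1 x2 => Q x1 * margin2 P x2) W1 + β := by
    set P2 : X1 → X2 → ℝ := fun x1 x2 => Q x1 * margin2 P x2 with hP2
    have hm1P2 : ∀ x1, margin1 P2 x1 = Q x1 := by
      intro x1
      rw [margin1]
      simp only [hP2]
      rw [← Finset.mul_sum, hm2s, mul_one]
    have hterm : ∀ x1, margin1 P2 x1 * mutInfo (cond2given1 P2 x1) (fun x2 => W1 x1 x2)
        = Q x1 * mutInfo (margin2 P) (fun x2 => W1 x1 x2) := by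
      intro x1
      rw [hm1P2 x1]
      rcases eq_or_ne (Q x1) 0 with h | h
      · rw [h, zero_mul, zero_mul]
      · have hce : cond2given1 P2 x1 = margin2 P := by
          funext x2
          show P2 x1 x2 / margin1 P2 x1 = margin2 P x2
          rw [hm1P2 x1]
          show Q x1 * margin2 P x2 / Q x1 = margin2 P x2
          rw [mul_div_cancel_left₀ _ h]
        rw [hce]
    rw [condMI21, Finset.sum_congr rfl fun x1 _ => hterm x1]
    have : mutInfo (margin2 P) (fun x2 => W1 x0 x2)
        = ∑ x1, Q x1 * mutInfo (margin2 P) (fun x2 => W1 x0 x2) := by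
      rw [← Finset.sum_mul, hQ.2, one_mul]
    rw [this]
    have hb : ∀ x1, Q x1 * mutInfo (margin2 P) (fun x2 => W1 x0 x2)
        ≤ Q x1 * mutInfo (margin2 P) (fun x2 => W1 x1 x2) + Q x1 * β := by
      intro x1
      have := (abs_le.1 (hinv (margin2 P) hm2d x0 x1)).2
      nlinarith [hQ.1 x1]
    calc ∑ x1, Q x1 * mutInfo (margin2 P) (fun x2 => W1 x0 x2)
        ≤ ∑ x1, (Q x1 * mutInfo (margin2 P) (fun x2 => W1 x1 x2) + Q x1 * β) :=
          Finset.sum_le_sum fun x1 _ => hb x1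
      _ = _ := by rw [Finset.sum_add_distrib, ← Finset.sum_mul, hQ.2, one_mul]
  linarith

end TWC
end

section
/- For every rate pair (R₁, R₂) ∈ C_O, there exists a rate pair (R₁', R₂') ∈ C_I such that R₁ ≤ R₁' + α* and R₂ ≤ R₂' + 2β*. -/
open scoped BigOperators

lemma isDist_unif (A : Type*) [Fintype A] [Nonempty A] :
    IsDist (fun _ : A => (Fintype.card A : ℝ)⁻¹) := by
  constructor
  · intro a; positivity
  · rw [Finset.sum_const, Finset.card_univ, nsmul_eq_mul, mul_inv_cancel₀]
    exact_mod_cast Fintype.card_ne_zero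

lemma sum_eq_zero_term {A : Type*} [Fintype A] {f : A → ℝ} (hf : ∀ a, 0 ≤ f a)
    (h : ∑ a, f a = 0) (a : A) : f a = 0 :=
  (Finset.sum_eq_zero_iff_of_nonneg (fun a _ => hf a)).1 h a (Finset.mem_univ a)

lemma mutInfo_nonneg {A B : Type*} [Fintype A] [Fintype B]
    {P : A → ℝ} {W : A → B → ℝ} (hP : IsDist P) (hW : ∀ a, IsDist (W a)) :
    0 ≤ mutInfo P W := by
  have hlog2 : (0:ℝ) < Real.log 2 := Real.log_pos one_lt_two
  have key : ∀ a b, (P a * W a b - P a * (∑ a', P a' * W a' b)) / Real.log 2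
      ≤ P a * W a b * Real.logb 2 (W a b / ∑ a', P a' * W a' b) := by
    intro a b
    set q := ∑ a', P a' * W a' b with hq
    have hq0 : 0 ≤ q := Finset.sum_nonneg fun a' _ => mul_nonneg (hP.1 a') ((hW a').1 b)
    by_cases hj : P a * W a b = 0
    · rw [hj, zero_mul, zero_sub]
      have h1 : 0 ≤ P a * q := mul_nonneg (hP.1 a) hq0
      have h2 : 0 ≤ (P a * q) / Real.log 2 := by positivity
      rw [neg_div]
      linarith
    · have hPa : 0 < P a := lt_of_le_of_ne (hP.1 a) (by
        intro h; exact hj (by rw [← h]; ring))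
      have hWab : 0 < W a b := lt_of_le_of_ne ((hW a).1 b) (by
        intro h; exact hj (by rw [← h]; ring))
      have hqj : P a * W a b ≤ q :=
        Finset.single_le_sum (fun a' _ => mul_nonneg (hP.1 a') ((hW a').1 b))
          (Finset.mem_univ a)
      have hqpos : 0 < q := lt_of_lt_of_le (by positivity) hqj
      have hx : 0 < W a b / q := by positivity
      have hlb : 1 - (W a b / q)⁻¹ ≤ Real.log (W a b / q) :=
        Real.one_sub_inv_le_log_of_pos hx
      have hinv : (W a b / q)⁻¹ = q / W a b := by
        field_simp
      rw [hinv] at hlb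
      have hmain : P a * W a b - P a * q ≤ P a * W a b * Real.log (W a b / q) := by
        have h3 := mul_le_mul_of_nonneg_left hlb (le_of_lt (mul_pos hPa hWab))
        calc P a * W a b - P a * q = P a * W a b * (1 - q / W a b) := by
              field_simp
          _ ≤ P a * W a b * Real.log (W a b / q) := h3
      rw [Real.logb]
      rw [show P a * W a b * (Real.log (W a b / q) / Real.log 2)
          = (P a * W a b * Real.log (W a b / q)) / Real.log 2 by ring]
      gcongr
  have hsum : ∑ a, ∑ b, (P a * W a b - P a * (∑ a', P a' * W a' b)) / Real.log 2 = 0 := by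
    have h1 : ∑ a : A, ∑ b : B, P a * W a b = 1 := by
      have : ∀ a, ∑ b, P a * W a b = P a := by
        intro a; rw [← Finset.mul_sum, (hW a).2, mul_one]
      simp_rw [this]; exact hP.2
    have h2 : ∑ a : A, ∑ b : B, P a * (∑ a', P a' * W a' b) = 1 := by
      have hswap : ∑ b : B, ∑ a' : A, P a' * W a' b = 1 := by
        rw [Finset.sum_comm]
        have : ∀ a', ∑ b, P a' * W a' b = P a' := by
          intro a'; rw [← Finset.mul_sum, (hW a').2, mul_one]
        simp_rw [this]; exact hP.2
      have : ∀ a : A, ∑ b : B, P a * (∑ a', P a' * W a' b)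
          = P a * ∑ b, ∑ a', P a' * W a' b := by
        intro a; rw [Finset.mul_sum]
      simp_rw [this, hswap, mul_one]; exact hP.2
    simp_rw [sub_div, Finset.sum_sub_distrib, ← Finset.sum_div, h1, h2, sub_self]
  calc (0:ℝ) = ∑ a, ∑ b, (P a * W a b - P a * (∑ a', P a' * W a' b)) / Real.log 2 :=
        hsum.symm
    _ ≤ mutInfo P W := Finset.sum_le_sum fun a _ => Finset.sum_le_sum fun b _ => key a b

lemma mutInfo_le {A B : Type*} [Fintype A] [Fintype B]
    {P : A → ℝ} {W : A → B → ℝ} (hP : IsDist P) (hW : ∀ a, IsDist (W a)) :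
    mutInfo P W ≤ 2 * Fintype.card A := by
  have hlog2 : (0:ℝ) < Real.log 2 := Real.log_pos one_lt_two
  have hlog2' : (1:ℝ) / 2 ≤ Real.log 2 := by
    have := Real.log_two_gt_d9; linarith
  have key : ∀ a : A, ∑ b, P a * W a b * Real.logb 2 (W a b / ∑ a', P a' * W a' b) ≤ 2 := by
    intro a
    by_cases hPa0 : P a = 0
    · simp [hPa0]
    have hPa : 0 < P a := lt_of_le_of_ne (hP.1 a) (Ne.symm hPa0)
    have hPa1 : P a ≤ 1 := by
      have := Finset.single_le_sum (fun a' (_ : a' ∈ Finset.univ) => hP.1 a')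
        (Finset.mem_univ a)
      rw [hP.2] at this; exact this
    have step1 : ∀ b, P a * W a b * Real.logb 2 (W a b / ∑ a', P a' * W a' b)
        ≤ P a * W a b * Real.logb 2 (1 / P a) := by
      intro b
      by_cases hWab0 : W a b = 0
      · simp [hWab0]
      have hWab : 0 < W a b := lt_of_le_of_ne ((hW a).1 b) (Ne.symm hWab0)
      have hqj : P a * W a b ≤ ∑ a', P a' * W a' b :=
        Finset.single_le_sum (fun a' _ => mul_nonneg (hP.1 a') ((hW a').1 b))
          (Finset.mem_univ a)
      have hqpos : 0 < ∑ a', P a' * W a' b := lt_of_lt_of_le (by positivity) hqj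
      have hle : W a b / ∑ a', P a' * W a' b ≤ 1 / P a := by
        rw [div_le_div_iff₀ hqpos hPa]
        calc W a b * P a = P a * W a b := by ring
          _ ≤ ∑ a', P a' * W a' b := hqj
          _ = 1 * ∑ a', P a' * W a' b := by ring
      have hxpos : 0 < W a b / ∑ a', P a' * W a' b := by positivity
      exact mul_le_mul_of_nonneg_left
        (Real.logb_le_logb_of_le one_lt_two hxpos hle)
        (mul_nonneg (hP.1 a) ((hW a).1 b))
    calc ∑ b, P a * W a b * Real.logb 2 (W a b / ∑ a', P a' * W a' b)
        ≤ ∑ b, P a * W a b * Real.logb 2 (1 / P a) :=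
          Finset.sum_le_sum fun b _ => step1 b
      _ = P a * Real.logb 2 (1 / P a) := by
          have : ∀ b, P a * W a b * Real.logb 2 (1 / P a)
              = P a * Real.logb 2 (1 / P a) * W a b := fun b => by ring
          simp_rw [this, ← Finset.mul_sum, (hW a).2, mul_one]
      _ ≤ 2 := by
          have hlog : Real.log (1 / P a) ≤ 1 / P a - 1 := by
            apply Real.log_le_sub_one_of_pos; positivity
          have h1 : P a * Real.log (1 / P a) ≤ 1 - P a := by
            have := mul_le_mul_of_nonneg_left hlog hPa.le
            calc P a * Real.log (1 / P a) ≤ P a * (1 / P a - 1) := this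
              _ = 1 - P a := by field_simp
          have h2 : P a * Real.log (1 / P a) ≤ 1 := by linarith
          rw [Real.logb]
          rw [show P a * (Real.log (1 / P a) / Real.log 2)
            = (P a * Real.log (1 / P a)) / Real.log 2 by ring]
          calc (P a * Real.log (1 / P a)) / Real.log 2 ≤ 1 / Real.log 2 := by
                gcongr
              _ ≤ 2 := by
                rw [div_le_iff₀ hlog2]; linarith
  calc mutInfo P W ≤ ∑ _a : A, (2:ℝ) := Finset.sum_le_sum fun a _ => key a
    _ = 2 * Fintype.card A := by simp [mul_comm]

lemma convexHull_downward {U : Set (ℝ × ℝ)}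
    (hU0 : ∀ p ∈ U, 0 ≤ p.1 ∧ 0 ≤ p.2)
    (hU : ∀ p ∈ U, ∀ q : ℝ × ℝ, 0 ≤ q.1 → 0 ≤ q.2 → q.1 ≤ p.1 → q.2 ≤ p.2 → q ∈ U) :
    ∀ p ∈ convexHull ℝ U, ∀ q : ℝ × ℝ, 0 ≤ q.1 → 0 ≤ q.2 → q.1 ≤ p.1 → q.2 ≤ p.2 →
      q ∈ convexHull ℝ U := by
  set S : Set (ℝ × ℝ) := {p | p ∈ convexHull ℝ U ∧
    ∀ q : ℝ × ℝ, 0 ≤ q.1 → 0 ≤ q.2 → q.1 ≤ p.1 → q.2 ≤ p.2 → q ∈ convexHull ℝ U} with hS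
  have hquad : convexHull ℝ U ⊆ {p : ℝ × ℝ | 0 ≤ p.1 ∧ 0 ≤ p.2} := by
    apply convexHull_min
    · exact fun p hp => hU0 p hp
    · intro x hx y hy a b ha hb hab
      constructor
      · have : a • x + b • y = (a * x.1 + b * y.1, a * x.2 + b * y.2) := rfl
        rw [this]
        have := hx.1; have := hy.1
        positivity
      · have : a • x + b • y = (a * x.1 + b * y.1, a * x.2 + b * y.2) := rfl
        rw [this]
        have := hx.2; have := hy.2
        positivity
  have hsub : convexHull ℝ U ⊆ S := by
    apply convexHull_min
    · intro p hp
      refine ⟨subset_convexHull ℝ U hp, fun q h1 h2 h3 h4 => subset_convexHull ℝ U ?_⟩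
      exact hU p hp q h1 h2 h3 h4
    · intro x hx y hy a b ha hb hab
      have hxm := hx.1; have hym := hy.1
      have hx1 : 0 ≤ x.1 := (hquad hxm).1
      have hx2 : 0 ≤ x.2 := (hquad hxm).2
      have hy1 : 0 ≤ y.1 := (hquad hym).1
      have hy2 : 0 ≤ y.2 := (hquad hym).2
      refine ⟨(convex_convexHull ℝ U) hxm hym ha hb hab, ?_⟩
      intro q hq1 hq2 hq3 hq4
      have hr : a • x + b • y = (a * x.1 + b * y.1, a * x.2 + b * y.2) := rfl
      rw [hr] at hq3 hq4
      set r1 := a * x.1 + b * y.1 with hr1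
      set r2 := a * x.2 + b * y.2 with hr2
      have hr1n : 0 ≤ r1 := by positivity
      have hr2n : 0 ≤ r2 := by positivity
      set t1 := if r1 = 0 then 0 else q.1 / r1 with ht1
      set t2 := if r2 = 0 then 0 else q.2 / r2 with ht2
      have hfacts : ∀ (r qc : ℝ), 0 ≤ r → 0 ≤ qc → qc ≤ r →
          (0 ≤ (if r = 0 then 0 else qc / r)) ∧ (if r = 0 then 0 else qc / r) ≤ 1 ∧
          (if r = 0 then (0:ℝ) else qc / r) * r = qc := by
        intro r qc hr hqc hle
        by_cases h : r = 0
        · subst h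
          simp only [if_pos]
          refine ⟨le_refl 0, by norm_num, by simp [le_antisymm hle hqc]⟩
        · have hrpos : 0 < r := lt_of_le_of_ne hr (Ne.symm h)
          rw [if_neg h]
          exact ⟨by positivity, by rw [div_le_one hrpos]; exact hle,
            div_mul_cancel₀ qc h⟩
      obtain ⟨h1n, h1le, h1mul⟩ := hfacts r1 q.1 hr1n hq1 hq3
      obtain ⟨h2n, h2le, h2mul⟩ := hfacts r2 q.2 hr2n hq2 hq4
      rw [← ht1] at h1n h1le h1mul
      rw [← ht2] at h2n h2le h2mul
      have hqa : (t1 * x.1, t2 * x.2) ∈ convexHull ℝ U := by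
        apply hx.2
        · exact mul_nonneg h1n hx1
        · exact mul_nonneg h2n hx2
        · calc t1 * x.1 ≤ 1 * x.1 := mul_le_mul_of_nonneg_right h1le hx1
            _ = x.1 := one_mul _
        · calc t2 * x.2 ≤ 1 * x.2 := mul_le_mul_of_nonneg_right h2le hx2
            _ = x.2 := one_mul _
      have hqb : (t1 * y.1, t2 * y.2) ∈ convexHull ℝ U := by
        apply hy.2
        · exact mul_nonneg h1n hy1
        · exact mul_nonneg h2n hy2
        · calc t1 * y.1 ≤ 1 * y.1 := mul_le_mul_of_nonneg_right h1le hy1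
            _ = y.1 := one_mul _
        · calc t2 * y.2 ≤ 1 * y.2 := mul_le_mul_of_nonneg_right h2le hy2
            _ = y.2 := one_mul _
      have hcomb := (convex_convexHull ℝ U) hqa hqb ha hb hab
      have : a • ((t1 * x.1, t2 * x.2) : ℝ × ℝ) + b • ((t1 * y.1, t2 * y.2) : ℝ × ℝ) = q := by
        have e1 : a • ((t1 * x.1, t2 * x.2) : ℝ × ℝ) + b • ((t1 * y.1, t2 * y.2) : ℝ × ℝ)
            = (a * (t1 * x.1) + b * (t1 * y.1), a * (t2 * x.2) + b * (t2 * y.2)) := rfl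
        rw [e1]
        have e2 : a * (t1 * x.1) + b * (t1 * y.1) = t1 * r1 := by rw [hr1]; ring
        have e3 : a * (t2 * x.2) + b * (t2 * y.2) = t2 * r2 := by rw [hr2]; ring
        rw [e2, e3, h1mul, h2mul]
      rwa [this] at hcomb
  intro p hp
  exact (hsub hp).2


section TWC

variable {X1 X2 Y1 Y2 : Type*} [Fintype X1] [Fintype X2] [Fintype Y1] [Fintype Y2]

lemma isDist_cond1given2 {P : X1 → X2 → ℝ} (hP : ∀ x1 x2, 0 ≤ P x1 x2) {x2 : X2}
    (h : margin2 P x2 ≠ 0) : IsDist (cond1given2 P x2) := by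
  constructor
  · intro x1
    exact div_nonneg (hP x1 x2) (Finset.sum_nonneg fun x1' _ => hP x1' x2)
  · unfold cond1given2
    rw [← Finset.sum_div]
    exact div_self h

lemma isDist_cond2given1 {P : X1 → X2 → ℝ} (hP : ∀ x1 x2, 0 ≤ P x1 x2) {x1 : X1}
    (h : margin1 P x1 ≠ 0) : IsDist (cond2given1 P x1) := by
  constructor
  · intro x2
    exact div_nonneg (hP x1 x2) (Finset.sum_nonneg fun x2' _ => hP x1 x2')
  · unfold cond2given1
    rw [← Finset.sum_div]
    exact div_self h

lemma condMI12_nonneg {W2 : X1 → X2 → Y2 → ℝ} (hW2 : ∀ x1 x2, IsDist (W2 x1 x2))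
    {P : X1 → X2 → ℝ} (hP : ∀ x1 x2, 0 ≤ P x1 x2) : 0 ≤ condMI12 P W2 := by
  apply Finset.sum_nonneg; intro x2 _
  by_cases h : margin2 P x2 = 0
  · rw [h, zero_mul]
  · exact mul_nonneg (Finset.sum_nonneg fun x1 _ => hP x1 x2)
      (mutInfo_nonneg (isDist_cond1given2 hP h) (fun x1 => hW2 x1 x2))

lemma condMI21_nonneg {W1 : X1 → X2 → Y1 → ℝ} (hW1 : ∀ x1 x2, IsDist (W1 x1 x2))
    {P : X1 → X2 → ℝ} (hP : ∀ x1 x2, 0 ≤ P x1 x2) : 0 ≤ condMI21 P W1 := by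
  apply Finset.sum_nonneg; intro x1 _
  by_cases h : margin1 P x1 = 0
  · rw [h, zero_mul]
  · exact mul_nonneg (Finset.sum_nonneg fun x2 _ => hP x1 x2)
      (mutInfo_nonneg (isDist_cond2given1 hP h) (fun x2 => hW1 x1 x2))

lemma betaStar_bddAbove {W1 : X1 → X2 → Y1 → ℝ} (hW1 : ∀ x1 x2, IsDist (W1 x1 x2)) :
    BddAbove {b | ∃ (P : X2 → ℝ) (x1 x1' : X1), IsDist P ∧ x1 ≠ x1' ∧
      b = |mutInfo P (fun x2 => W1 x1 x2) - mutInfo P (fun x2 => W1 x1' x2)|} := by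
  refine ⟨2 * Fintype.card X2, ?_⟩
  rintro b ⟨P, x1, x1', hPd, -, rfl⟩
  have h1 := mutInfo_nonneg hPd (fun x2 => hW1 x1 x2)
  have h2 := mutInfo_le hPd (fun x2 => hW1 x1 x2)
  have h3 := mutInfo_nonneg hPd (fun x2 => hW1 x1' x2)
  have h4 := mutInfo_le hPd (fun x2 => hW1 x1' x2)
  exact abs_le.2 ⟨by linarith, by linarith⟩

lemma betaStar_nonneg [Nonempty X2] {W1 : X1 → X2 → Y1 → ℝ}
    (hW1 : ∀ x1 x2, IsDist (W1 x1 x2)) : 0 ≤ betaStar W1 := by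
  by_cases hx : ∃ x1 x1' : X1, x1 ≠ x1'
  · obtain ⟨x1, x1', hne⟩ := hx
    have hmem : |mutInfo (fun _ : X2 => (Fintype.card X2 : ℝ)⁻¹) (fun x2 => W1 x1 x2) -
        mutInfo (fun _ : X2 => (Fintype.card X2 : ℝ)⁻¹) (fun x2 => W1 x1' x2)| ∈
        {b | ∃ (P : X2 → ℝ) (x1 x1' : X1), IsDist P ∧ x1 ≠ x1' ∧
          b = |mutInfo P (fun x2 => W1 x1 x2) - mutInfo P (fun x2 => W1 x1' x2)|} :=
      ⟨fun _ => (Fintype.card X2 : ℝ)⁻¹, x1, x1', isDist_unif X2, hne, rfl⟩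
    exact le_trans (abs_nonneg _) (le_csSup (betaStar_bddAbove hW1) hmem)
  · have hempty : {b | ∃ (P : X2 → ℝ) (x1 x1' : X1), IsDist P ∧ x1 ≠ x1' ∧
        b = |mutInfo P (fun x2 => W1 x1 x2) - mutInfo P (fun x2 => W1 x1' x2)|} = ∅ := by
      ext b
      simp only [Set.mem_setOf_eq, Set.mem_empty_iff_false, iff_false]
      rintro ⟨P, x1, x1', -, hne, -⟩
      exact hx ⟨x1, x1', hne⟩
    rw [betaStar, hempty, Real.sSup_empty]

lemma mutInfo_beta [Nonempty X2] {W1 : X1 → X2 → Y1 → ℝ}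
    (hW1 : ∀ x1 x2, IsDist (W1 x1 x2)) {Q : X2 → ℝ} (hQ : IsDist Q) (x1 x1' : X1) :
    mutInfo Q (fun x2 => W1 x1 x2) - betaStar W1 ≤ mutInfo Q (fun x2 => W1 x1' x2) := by
  by_cases h : x1 = x1'
  · subst h
    have := betaStar_nonneg hW1 (W1 := W1)
    linarith
  · have hmem : |mutInfo Q (fun x2 => W1 x1 x2) - mutInfo Q (fun x2 => W1 x1' x2)| ∈
        {b | ∃ (P : X2 → ℝ) (x1 x1' : X1), IsDist P ∧ x1 ≠ x1' ∧
          b = |mutInfo P (fun x2 => W1 x1 x2) - mutInfo P (fun x2 => W1 x1' x2)|} :=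
      ⟨Q, x1, x1', hQ, h, rfl⟩
    have h1 := le_csSup (betaStar_bddAbove hW1) hmem
    have h2 := le_abs_self
      (mutInfo Q (fun x2 => W1 x1 x2) - mutInfo Q (fun x2 => W1 x1' x2))
    rw [betaStar]
    linarith

lemma capAt_bddAbove {W2 : X1 → X2 → Y2 → ℝ} (hW2 : ∀ x1 x2, IsDist (W2 x1 x2))
    (x2 : X2) :
    BddAbove {I | ∃ P : X1 → ℝ, IsDist P ∧ I = mutInfo P (fun x1 => W2 x1 x2)} := by
  refine ⟨2 * Fintype.card X1, ?_⟩
  rintro I ⟨P, hPd, rfl⟩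
  exact mutInfo_le hPd (fun x1 => hW2 x1 x2)

lemma le_capAt {W2 : X1 → X2 → Y2 → ℝ} (hW2 : ∀ x1 x2, IsDist (W2 x1 x2))
    {Q : X1 → ℝ} (hQ : IsDist Q) (x2 : X2) :
    mutInfo Q (fun x1 => W2 x1 x2) ≤ capAt W2 x2 :=
  le_csSup (capAt_bddAbove hW2 x2) ⟨Q, hQ, rfl⟩


lemma approx [Nonempty X1] [Nonempty X2]
    (W1 : X1 → X2 → Y1 → ℝ) (W2 : X1 → X2 → Y2 → ℝ)
    (hW1 : ∀ x1 x2, IsDist (W1 x1 x2)) (hW2 : ∀ x1 x2, IsDist (W2 x1 x2))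
    (P : X1 → X2 → ℝ) (hP : IsJointDist P) {ε : ℝ} (hε : 0 < ε) :
    ∃ p ∈ convexHull ℝ (⋃ Q ∈ {Q : X1 → X2 → ℝ |
        ∃ P1 P2, IsDist P1 ∧ IsDist P2 ∧ Q = fun x1 x2 => P1 x1 * P2 x2},
      rateRegion W1 W2 Q),
      0 ≤ p.1 ∧ 0 ≤ p.2 ∧
      condMI12 P W2 - alphaStar W2 - ε ≤ p.1 ∧
      condMI21 P W1 - betaStar W1 ≤ p.2 := by
  set U := (⋃ Q ∈ {Q : X1 → X2 → ℝ |
      ∃ P1 P2, IsDist P1 ∧ IsDist P2 ∧ Q = fun x1 x2 => P1 x1 * P2 x2},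
    rateRegion W1 W2 Q) with hU
  have hSA : Set.Nonempty {a | ∃ Pt : X1 → ℝ, IsDist Pt ∧
      a = ⨆ x2, |mutInfo Pt (fun x1 => W2 x1 x2) - capAt W2 x2|} :=
    ⟨_, ⟨fun _ => (Fintype.card X1 : ℝ)⁻¹, isDist_unif X1, rfl⟩⟩
  obtain ⟨a, haA, halt⟩ := Real.lt_sInf_add_pos hSA hε
  obtain ⟨Pt, hPt, haeq⟩ := haA
  have ha' : a < alphaStar W2 + ε := by unfold alphaStar; exact halt
  have hacap : ∀ x2, capAt W2 x2 ≤ mutInfo Pt (fun x1 => W2 x1 x2) + a := by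
    intro x2
    have hfin : BddAbove (Set.range fun x2 =>
        |mutInfo Pt (fun x1 => W2 x1 x2) - capAt W2 x2|) :=
      (Set.finite_range _).bddAbove
    have h1 : |mutInfo Pt (fun x1 => W2 x1 x2) - capAt W2 x2| ≤ a := by
      rw [haeq]; exact le_ciSup hfin x2
    have h2 := neg_abs_le (mutInfo Pt (fun x1 => W2 x1 x2) - capAt W2 x2)
    linarith
  set w := margin1 P with hwdef
  have hw0 : ∀ x1, 0 ≤ w x1 := fun x1 => Finset.sum_nonneg fun x2 _ => hP.1 x1 x2
  have hwsum : ∑ x1, w x1 = 1 := hP.2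
  set Qx : X1 → X2 → ℝ := fun x1 =>
    if w x1 = 0 then (fun _ => (Fintype.card X2 : ℝ)⁻¹) else cond2given1 P x1 with hQx
  have hQxd : ∀ x1, IsDist (Qx x1) := by
    intro x1
    by_cases h : w x1 = 0
    · rw [hQx]; simp only [if_pos h]; exact isDist_unif X2
    · rw [hQx]; simp only [if_neg h]; exact isDist_cond2given1 hP.1 h
  set Pi : X1 → X1 → X2 → ℝ := fun x1 a b => Pt a * Qx x1 b with hPi
  have hm2 : ∀ x1 x2, margin2 (Pi x1) x2 = Qx x1 x2 := by
    intro x1 x2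
    show (∑ a, Pt a * Qx x1 x2) = Qx x1 x2
    rw [← Finset.sum_mul, hPt.2, one_mul]
  have hm1 : ∀ x1 a, margin1 (Pi x1) a = Pt a := by
    intro x1 a
    show (∑ b, Pt a * Qx x1 b) = Pt a
    rw [← Finset.mul_sum, (hQxd x1).2, mul_one]
  have hc12 : ∀ x1 x2, Qx x1 x2 ≠ 0 → cond1given2 (Pi x1) x2 = Pt := by
    intro x1 x2 h
    funext a
    show Pi x1 a x2 / margin2 (Pi x1) x2 = Pt a
    rw [hm2]
    exact mul_div_cancel_right₀ _ h
  have hc21 : ∀ x1 a, Pt a ≠ 0 → cond2given1 (Pi x1) a = Qx x1 := by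
    intro x1 a h
    funext b
    show Pi x1 a b / margin1 (Pi x1) a = Qx x1 b
    rw [hm1]
    show Pt a * Qx x1 b / Pt a = Qx x1 b
    rw [mul_comm]
    exact mul_div_cancel_right₀ _ h
  set z : X1 → ℝ × ℝ := fun x1 => (condMI12 (Pi x1) W2, condMI21 (Pi x1) W1) with hz
  have hPinn : ∀ x1 a b, 0 ≤ Pi x1 a b := fun x1 a b =>
    mul_nonneg (hPt.1 a) ((hQxd x1).1 b)
  have hzU : ∀ x1, z x1 ∈ U := by
    intro x1
    rw [hU]
    refine Set.mem_biUnion ⟨Pt, Qx x1, hPt, hQxd x1, rfl⟩ ?_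
    exact ⟨condMI12_nonneg hW2 (hPinn x1), le_refl _,
      condMI21_nonneg hW1 (hPinn x1), le_refl _⟩
  have hfst : (∑ x1, w x1 • z x1).1 = ∑ x1, w x1 * (z x1).1 := by
    rw [Prod.fst_sum]
    exact Finset.sum_congr rfl fun x1 _ => rfl
  have hsnd : (∑ x1, w x1 • z x1).2 = ∑ x1, w x1 * (z x1).2 := by
    rw [Prod.snd_sum]
    exact Finset.sum_congr rfl fun x1 _ => rfl
  have hz1nn : ∀ x1, 0 ≤ (z x1).1 := fun x1 => condMI12_nonneg hW2 (hPinn x1)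
  have hz2nn : ∀ x1, 0 ≤ (z x1).2 := fun x1 => condMI21_nonneg hW1 (hPinn x1)
  have claim1 : ∀ x1, (∑ x2, Qx x1 x2 * capAt W2 x2) - a ≤ condMI12 (Pi x1) W2 := by
    intro x1
    have hterm : ∀ x2, Qx x1 x2 * (capAt W2 x2 - a) ≤
        margin2 (Pi x1) x2 * mutInfo (cond1given2 (Pi x1) x2) (fun a' => W2 a' x2) := by
      intro x2
      rw [hm2]
      by_cases h : Qx x1 x2 = 0
      · rw [h, zero_mul, zero_mul]
      · rw [hc12 x1 x2 h]
        refine mul_le_mul_of_nonneg_left ?_ ((hQxd x1).1 x2)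
        have := hacap x2; linarith
    calc (∑ x2, Qx x1 x2 * capAt W2 x2) - a
        = ∑ x2, Qx x1 x2 * (capAt W2 x2 - a) := by
          simp_rw [mul_sub, Finset.sum_sub_distrib, ← Finset.sum_mul, (hQxd x1).2, one_mul]
      _ ≤ ∑ x2, margin2 (Pi x1) x2 * mutInfo (cond1given2 (Pi x1) x2) (fun a' => W2 a' x2) :=
          Finset.sum_le_sum fun x2 _ => hterm x2
      _ = condMI12 (Pi x1) W2 := rfl
  have claim2 : ∑ x1, w x1 * (∑ x2, Qx x1 x2 * capAt W2 x2)
      = ∑ x2, margin2 P x2 * capAt W2 x2 := by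
    have hterm : ∀ x1, w x1 * (∑ x2, Qx x1 x2 * capAt W2 x2)
        = ∑ x2, P x1 x2 * capAt W2 x2 := by
      intro x1
      by_cases h : w x1 = 0
      · rw [h, zero_mul]
        symm
        apply Finset.sum_eq_zero
        intro x2 _
        have hz0 : P x1 x2 = 0 := sum_eq_zero_term (fun x2 => hP.1 x1 x2) h x2
        rw [hz0, zero_mul]
      · rw [hQx]
        simp only [if_neg h]
        rw [Finset.mul_sum]
        apply Finset.sum_congr rfl
        intro x2 _
        unfold cond2given1
        rw [← hwdef]
        field_simp
    calc ∑ x1, w x1 * (∑ x2, Qx x1 x2 * capAt W2 x2)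
        = ∑ x1, ∑ x2, P x1 x2 * capAt W2 x2 := Finset.sum_congr rfl fun x1 _ => hterm x1
      _ = ∑ x2, ∑ x1, P x1 x2 * capAt W2 x2 := Finset.sum_comm
      _ = ∑ x2, margin2 P x2 * capAt W2 x2 := by
          apply Finset.sum_congr rfl
          intro x2 _
          rw [margin2, Finset.sum_mul]
  have claim3 : condMI12 P W2 ≤ ∑ x2, margin2 P x2 * capAt W2 x2 := by
    apply Finset.sum_le_sum
    intro x2 _
    by_cases h : margin2 P x2 = 0
    · rw [h, zero_mul, zero_mul]
    · exact mul_le_mul_of_nonneg_left (le_capAt hW2 (isDist_cond1given2 hP.1 h) x2)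
        (Finset.sum_nonneg fun x1 _ => hP.1 x1 x2)
  have claim4 : ∀ x1, mutInfo (Qx x1) (fun x2 => W1 x1 x2) - betaStar W1
      ≤ condMI21 (Pi x1) W1 := by
    intro x1
    have hterm : ∀ a', Pt a' * (mutInfo (Qx x1) (fun x2 => W1 x1 x2) - betaStar W1) ≤
        margin1 (Pi x1) a' * mutInfo (cond2given1 (Pi x1) a') (fun x2 => W1 a' x2) := by
      intro a'
      rw [hm1]
      by_cases h : Pt a' = 0
      · rw [h, zero_mul, zero_mul]
      · rw [hc21 x1 a' h]
        exact mul_le_mul_of_nonneg_left (mutInfo_beta hW1 (hQxd x1) x1 a') (hPt.1 a')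
    calc mutInfo (Qx x1) (fun x2 => W1 x1 x2) - betaStar W1
        = ∑ a', Pt a' * (mutInfo (Qx x1) (fun x2 => W1 x1 x2) - betaStar W1) := by
          rw [← Finset.sum_mul, hPt.2, one_mul]
      _ ≤ ∑ a', margin1 (Pi x1) a' * mutInfo (cond2given1 (Pi x1) a') (fun x2 => W1 a' x2) :=
          Finset.sum_le_sum fun a' _ => hterm a'
      _ = condMI21 (Pi x1) W1 := rfl
  have claim5 : ∑ x1, w x1 * mutInfo (Qx x1) (fun x2 => W1 x1 x2) = condMI21 P W1 := by
    unfold condMI21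
    rw [← hwdef]
    apply Finset.sum_congr rfl
    intro x1 _
    by_cases h : w x1 = 0
    · rw [h, zero_mul, zero_mul]
    · rw [hQx]
      simp only [if_neg h]
  refine ⟨∑ x1, w x1 • z x1, ?_, ?_, ?_, ?_, ?_⟩
  · exact Convex.sum_mem (convex_convexHull ℝ U) (fun i _ => hw0 i) hwsum
      (fun i _ => subset_convexHull ℝ U (hzU i))
  · rw [hfst]
    exact Finset.sum_nonneg fun x1 _ => mul_nonneg (hw0 x1) (hz1nn x1)
  · rw [hsnd]
    exact Finset.sum_nonneg fun x1 _ => mul_nonneg (hw0 x1) (hz2nn x1)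
  · rw [hfst]
    calc condMI12 P W2 - alphaStar W2 - ε ≤ condMI12 P W2 - a := by linarith
      _ ≤ (∑ x2, margin2 P x2 * capAt W2 x2) - a := by linarith [claim3]
      _ = (∑ x1, w x1 * (∑ x2, Qx x1 x2 * capAt W2 x2)) - a := by rw [claim2]
      _ = ∑ x1, w x1 * ((∑ x2, Qx x1 x2 * capAt W2 x2) - a) := by
          simp_rw [mul_sub, Finset.sum_sub_distrib, ← Finset.sum_mul, hwsum, one_mul]
      _ ≤ ∑ x1, w x1 * (z x1).1 := Finset.sum_le_sum fun x1 _ =>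
          mul_le_mul_of_nonneg_left (claim1 x1) (hw0 x1)
  · rw [hsnd]
    calc condMI21 P W1 - betaStar W1
        = (∑ x1, w x1 * mutInfo (Qx x1) (fun x2 => W1 x1 x2)) - betaStar W1 := by
          rw [claim5]
      _ = ∑ x1, w x1 * (mutInfo (Qx x1) (fun x2 => W1 x1 x2) - betaStar W1) := by
          simp_rw [mul_sub, Finset.sum_sub_distrib, ← Finset.sum_mul, hwsum, one_mul]
      _ ≤ ∑ x1, w x1 * (z x1).2 := Finset.sum_le_sum fun x1 _ =>
          mul_le_mul_of_nonneg_left (claim4 x1) (hw0 x1)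

/-- for every rate pair in C_O there is a rate pair (R₁',R₂') in C_I with
R₁ ≤ R₁' + α* and R₂ ≤ R₂' + 2β*. -/
theorem stmt6 [Nonempty X1] [Nonempty X2]
    (W1 : X1 → X2 → Y1 → ℝ) (W2 : X1 → X2 → Y2 → ℝ)
    (hW1 : ∀ x1 x2, IsDist (W1 x1 x2)) (hW2 : ∀ x1 x2, IsDist (W2 x1 x2))
    (R : ℝ × ℝ) (hR : R ∈ outerBound W1 W2) :
    ∃ R' ∈ innerBound W1 W2,
      R.1 ≤ R'.1 + alphaStar W2 ∧ R.2 ≤ R'.2 + 2 * betaStar W1 := by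
  set U := (⋃ Q ∈ {Q : X1 → X2 → ℝ |
      ∃ P1 P2, IsDist P1 ∧ IsDist P2 ∧ Q = fun x1 x2 => P1 x1 * P2 x2},
    rateRegion W1 W2 Q) with hU
  rw [outerBound] at hR
  obtain ⟨P, hPJ, hRreg⟩ := Set.mem_iUnion₂.1 hR
  obtain ⟨hR1n, hR1le, hR2n, hR2le⟩ := hRreg
  have hPJ' : IsJointDist P := hPJ
  have hbeta0 : 0 ≤ betaStar W1 := betaStar_nonneg hW1
  have hU0 : ∀ p ∈ U, 0 ≤ p.1 ∧ 0 ≤ p.2 := by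
    intro p hp
    rw [hU] at hp
    obtain ⟨Q, hQ, hpQ⟩ := Set.mem_iUnion₂.1 hp
    exact ⟨hpQ.1, hpQ.2.2.1⟩
  have hUdown : ∀ p ∈ U, ∀ q : ℝ × ℝ, 0 ≤ q.1 → 0 ≤ q.2 → q.1 ≤ p.1 → q.2 ≤ p.2 →
      q ∈ U := by
    intro p hp q h1 h2 h3 h4
    rw [hU] at hp ⊢
    obtain ⟨Q, hQ, hpQ⟩ := Set.mem_iUnion₂.1 hp
    exact Set.mem_biUnion hQ ⟨h1, le_trans h3 hpQ.2.1, h2, le_trans h4 hpQ.2.2.2⟩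
  set R' : ℝ × ℝ := (max (R.1 - alphaStar W2) 0, max (R.2 - 2 * betaStar W1) 0) with hR'
  have hR'1 : R'.1 = max (R.1 - alphaStar W2) 0 := rfl
  have hR'2 : R'.2 = max (R.2 - 2 * betaStar W1) 0 := rfl
  have hR'mem : R' ∈ innerBound W1 W2 := by
    unfold innerBound
    rw [← hU, Metric.mem_closure_iff]
    intro ε hε
    have hε2 : 0 < ε / 2 := by linarith
    obtain ⟨p, hpconv, hp1n, hp2n, hp1, hp2⟩ := approx W1 W2 hW1 hW2 P hPJ' hε2
    rw [← hU] at hpconv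
    refine ⟨(min R'.1 p.1, min R'.2 p.2), ?_, ?_⟩
    · apply convexHull_downward hU0 hUdown p hpconv
      · exact le_min (le_trans (le_max_right _ _) (le_of_eq hR'1.symm)) hp1n
      · exact le_min (le_trans (le_max_right _ _) (le_of_eq hR'2.symm)) hp2n
      · exact min_le_right _ _
      · exact min_le_right _ _
    · have h2eq : min R'.2 p.2 = R'.2 := by
        apply min_eq_left
        rw [hR'2]
        apply max_le
        · linarith
        · exact hp2n
      have h1ge : R'.1 - ε / 2 ≤ min R'.1 p.1 := by
        apply le_min
        · linarith
        · rw [hR'1]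
          have : max (R.1 - alphaStar W2) 0 ≤ p.1 + ε / 2 := by
            apply max_le
            · linarith
            · linarith
          linarith
      have h1le : min R'.1 p.1 ≤ R'.1 := min_le_left _ _
      rw [Prod.dist_eq]
      have hd1 : dist R'.1 (min R'.1 p.1) ≤ ε / 2 := by
        rw [Real.dist_eq, abs_le]
        constructor <;> [linarith; linarith]
      have hd2 : dist R'.2 (min R'.2 p.2) ≤ ε / 2 := by
        rw [h2eq, Real.dist_eq, sub_self, abs_zero]
        linarith
      calc (dist R'.1 (min R'.1 p.1, min R'.2 p.2).1 ⊔
            dist R'.2 (min R'.1 p.1, min R'.2 p.2).2)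
          = dist R'.1 (min R'.1 p.1) ⊔ dist R'.2 (min R'.2 p.2) := rfl
        _ ≤ ε / 2 := max_le hd1 hd2
        _ < ε := by linarith
  refine ⟨R', hR'mem, ?_, ?_⟩
  · rw [hR'1]
    have := le_max_left (R.1 - alphaStar W2) 0
    linarith
  · rw [hR'2]
    have := le_max_left (R.2 - 2 * betaStar W1) 0
    linarith

end TWC
end
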